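/- For every fixed m > 0, lim_{t→0⁺} t^{d/α} p^m(t,0) = ω_d Γ(d/α)/((2π)^d α), where ω_d = 2π^{d/2}/Γ(d/2). Consequently, for any measurable set D ⊂ ℝ^d of finite Lebesgue measure, lim_{t→0⁺} t^{d/α} ∫_D p^m(t,0) dx = |D| · ω_d Γ(d/α)/((2π)^d α). -/

import Mathlib

open MeasureTheory Real Set Filter

/-- The transition density `p^m(t,x)` of the relativistic `α`-stable process with mass `m`. -/
noncomputable def relDensity (d : ℕ) (α m t : ℝ) (x : EuclideanSpace ℝ (Fin d)) : ℝ :=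
  (2 * Real.pi) ^ (-(d : ℝ)) *
    (∫ ξ : EuclideanSpace ℝ (Fin d),
      Complex.exp (-(Complex.I * ((inner ℝ ξ x : ℝ) : ℂ)) -
        ((t * ((‖ξ‖ ^ (2 : ℝ) + m ^ ((2 : ℝ) / α)) ^ (α / 2) - m) : ℝ) : ℂ))).re

/-!
At the origin the oscillating factor disappears, so `p^m(t,0) = (2π)^{-d} ∫ exp(-t ψ_m(ξ)) dξ`
with `ψ_m(ξ) = (|ξ|² + m^{2/α})^{α/2} - m`. The substitution `ξ = t^{-1/α} u` trades time for
mass, `t ψ_m(t^{-1/α} u) = ψ_{tm}(u)`, so `t^{d/α} p^m(t,0) = (2π)^{-d} ∫ exp(-ψ_{tm}(u)) du`.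
As `tm → 0⁺` the integrand tends to `exp(-|u|^α)`, dominated by `e · exp(-|u|^α)`, and
`∫ exp(-|u|^α) du = ω_d Γ(d/α)/α` follows from the volume of the unit ball.
The integrand of `∫_D p^m(t,0) dx` is constant, so the second limit is the first times `|D|`.
-/

open Topology

noncomputable def relSymbol {E : Type*} [NormedAddCommGroup E] (α m : ℝ) (ξ : E) : ℝ :=
  (‖ξ‖ ^ (2 : ℝ) + m ^ ((2 : ℝ) / α)) ^ (α / 2) - m

section RelSymbol

variable {E : Type*} [NormedAddCommGroup E] {α m : ℝ}

lemma relSymbol_zero_mass (hα : α ≠ 0) (ξ : E) : relSymbol α 0 ξ = ‖ξ‖ ^ α := by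
  rw [relSymbol, zero_rpow (by positivity), add_zero, sub_zero, ← rpow_mul (norm_nonneg ξ)]
  ring_nf

lemma norm_rpow_sub_le_relSymbol (hα : 0 ≤ α) (hm : 0 ≤ m) (ξ : E) :
    ‖ξ‖ ^ α - m ≤ relSymbol α m ξ := by
  have hmono : ‖ξ‖ ^ α ≤ (‖ξ‖ ^ (2 : ℝ) + m ^ ((2 : ℝ) / α)) ^ (α / 2) := by
    calc ‖ξ‖ ^ α = (‖ξ‖ ^ (2 : ℝ)) ^ (α / 2) := by rw [← rpow_mul (norm_nonneg ξ)]; ring_nf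
      _ ≤ _ := by gcongr; exact le_add_of_nonneg_right (by positivity)
  unfold relSymbol; linarith

lemma continuous_relSymbol_uncurry (hα : 0 ≤ α) :
    Continuous fun p : ℝ × E => relSymbol α p.1 p.2 := by
  unfold relSymbol
  have h₁ := continuous_rpow_const (q := 2 / α) (by positivity)
  have h₂ := continuous_rpow_const (q := α / 2) (by positivity)
  have h₃ := continuous_rpow_const (q := 2) zero_le_two
  fun_prop

lemma mul_relSymbol_smul [NormedSpace ℝ E] (hα : α ≠ 0) {t : ℝ} (ht : 0 < t) (hm : 0 ≤ m)
    (u : E) :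
    t * relSymbol α m ((t ^ (1 / α))⁻¹ • u) = relSymbol α (t * m) u := by
  have hnorm : ‖(t ^ (1 / α))⁻¹ • u‖ ^ (2 : ℝ) = (t ^ ((2 : ℝ) / α))⁻¹ * ‖u‖ ^ (2 : ℝ) := by
    rw [norm_smul, norm_inv, norm_of_nonneg (by positivity),
      mul_rpow (by positivity) (norm_nonneg u), inv_rpow (by positivity), ← rpow_mul ht.le]
    ring_nf
  have ht' : t = (t ^ ((2 : ℝ) / α)) ^ (α / 2) := by
    rw [← rpow_mul ht.le]; field_simp; simp
  unfold relSymbol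
  rw [hnorm, mul_sub, mul_rpow ht.le hm]
  nth_rw 1 [ht']
  rw [← mul_rpow (by positivity) (by positivity), mul_add, mul_inv_cancel_left₀ (by positivity)]

end RelSymbol

section Integral

variable {E : Type*} [NormedAddCommGroup E] [NormedSpace ℝ E] [FiniteDimensional ℝ E]
  [MeasurableSpace E] [BorelSpace E] (μ : Measure E) [μ.IsAddHaarMeasure] {α m : ℝ}

lemma integrable_exp_neg_norm_rpow [Nontrivial E] {p : ℝ} (hp : 0 < p) :
    Integrable (fun x : E => exp (-‖x‖ ^ p)) μ := by
  rw [integrable_fun_norm_addHaar μ (f := fun r => exp (-r ^ p))]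
  refine (integrableOn_rpow_mul_exp_neg_rpow (s := (Module.finrank ℝ E - 1 : ℕ))
    (neg_one_lt_zero.trans_le (Nat.cast_nonneg _)) hp).congr_fun
    (fun r _ => ?_) measurableSet_Ioi
  simp [rpow_natCast]

lemma rpow_mul_integral_exp_neg_mul_relSymbol (hα : α ≠ 0) {t : ℝ} (ht : 0 < t) (hm : 0 ≤ m) :
    t ^ (Module.finrank ℝ E / α) * ∫ ξ, exp (-(t * relSymbol α m ξ)) ∂μ =
      ∫ u, exp (-relSymbol α (t * m) u) ∂μ := by
  have hpow : t ^ (Module.finrank ℝ E / α) = (t ^ (1 / α)) ^ Module.finrank ℝ E := by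
    rw [← rpow_natCast, ← rpow_mul ht.le]; ring_nf
  rw [hpow, ← smul_eq_mul, ← Measure.integral_comp_inv_smul_of_nonneg μ _ (by positivity)]
  simp_rw [mul_relSymbol_smul hα ht hm]

lemma tendsto_integral_exp_neg_relSymbol [Nontrivial E] (hα : 0 < α) :
    Tendsto (fun m => ∫ u, exp (-relSymbol α m u) ∂μ) (𝓝[>] 0)
      (𝓝 (∫ u, exp (-‖u‖ ^ α) ∂μ)) := by
  refine tendsto_integral_filter_of_dominated_convergence (fun u => exp 1 * exp (-‖u‖ ^ α))
    (.of_forall fun m => ?_) ?_ ((integrable_exp_neg_norm_rpow μ hα).const_mul _)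
    (.of_forall fun u => ?_)
  · exact ((continuous_relSymbol_uncurry hα.le).comp (.prodMk_right m)).neg.rexp
      |>.aestronglyMeasurable
  · filter_upwards [Ioc_mem_nhdsGT zero_lt_one] with m ⟨hm₀, hm₁⟩
    refine .of_forall fun u => ?_
    rw [norm_of_nonneg (exp_nonneg _), ← exp_add]
    gcongr
    linarith [norm_rpow_sub_le_relSymbol hα.le hm₀.le u]
  · have h : Tendsto (fun m => exp (-relSymbol α m u)) (𝓝 0) (𝓝 (exp (-relSymbol α 0 u))) :=
      ((continuous_relSymbol_uncurry hα.le).comp (.prodMk_left u)).neg.rexp.tendsto 0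
    rw [relSymbol_zero_mass hα.ne'] at h
    exact h.mono_left nhdsWithin_le_nhds

end Integral

lemma integral_exp_neg_norm_rpow {E : Type*} [NormedAddCommGroup E] [InnerProductSpace ℝ E]
    [FiniteDimensional ℝ E] [MeasurableSpace E] [BorelSpace E] [Nontrivial E] {p : ℝ} (hp : 0 < p) :
    ∫ x : E, exp (-‖x‖ ^ p) =
      2 * π ^ (Module.finrank ℝ E / 2 : ℝ) / Gamma (Module.finrank ℝ E / 2) *
        Gamma (Module.finrank ℝ E / p) / p := by
  have hball := measure_unitBall_eq_integral_div_gamma (volume : Measure E) hp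
  have hn : (0 : ℝ) < Module.finrank ℝ E := Nat.cast_pos.mpr Module.finrank_pos
  rw [InnerProductSpace.volume_ball, ENNReal.ofReal_one, one_pow, one_mul,
    ENNReal.ofReal_eq_ofReal_iff (by positivity)
      (div_nonneg (integral_nonneg fun _ => (exp_pos _).le) (Gamma_pos_of_pos (by positivity)).le),
    div_eq_div_iff (Gamma_pos_of_pos (by positivity)).ne' (Gamma_pos_of_pos (by positivity)).ne',
    Gamma_add_one (by positivity), Gamma_add_one (by positivity), sqrt_eq_rpow, ← rpow_natCast,
    ← rpow_mul pi_pos.le] at hball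
  have hΓ : 0 < Gamma (Module.finrank ℝ E / 2) := Gamma_pos_of_pos (by positivity)
  generalize (Module.finrank ℝ E : ℝ) = n at *
  rw [mul_comm (1 / 2), ← div_eq_mul_one_div] at hball
  field_simp at hball ⊢
  linear_combination -hball

lemma relDensity_zero (d : ℕ) (α m t : ℝ) :
    relDensity d α m t 0 =
      (2 * π) ^ (-(d : ℝ)) * ∫ ξ : EuclideanSpace ℝ (Fin d), exp (-(t * relSymbol α m ξ)) := by
  have hintegrand (ξ : EuclideanSpace ℝ (Fin d)) :
      Complex.exp (-(Complex.I * ((inner ℝ ξ 0 : ℝ) : ℂ)) -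
        ((t * ((‖ξ‖ ^ (2 : ℝ) + m ^ ((2 : ℝ) / α)) ^ (α / 2) - m) : ℝ) : ℂ)) =
      (exp (-(t * relSymbol α m ξ)) : ℂ) := by
    rw [inner_zero_right, Complex.ofReal_exp, relSymbol]
    push_cast
    ring_nf
  simp_rw [relDensity, hintegrand, integral_complex_ofReal, Complex.ofReal_re]

theorem relDensity_on_diagonal_limit_general (d : ℕ) (hd : 2 ≤ d) (α : ℝ) (hα₀ : 0 < α)
    (m : ℝ) (hm : 0 < m) :
    Tendsto (fun t : ℝ => t ^ ((d : ℝ) / α) * relDensity d α m t 0)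
        (nhdsWithin 0 (Set.Ioi 0))
        (nhds ((2 * Real.pi ^ ((d : ℝ) / 2) / Real.Gamma ((d : ℝ) / 2)) *
          Real.Gamma ((d : ℝ) / α) / ((2 * Real.pi) ^ d * α)))
      ∧ ∀ D : Set (EuclideanSpace ℝ (Fin d)), MeasurableSet D → volume D < ⊤ →
          Tendsto (fun t : ℝ => t ^ ((d : ℝ) / α) * ∫ _x in D, relDensity d α m t 0)
            (nhdsWithin 0 (Set.Ioi 0))
            (nhds ((volume D).toReal *
              ((2 * Real.pi ^ ((d : ℝ) / 2) / Real.Gamma ((d : ℝ) / 2)) *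
                Real.Gamma ((d : ℝ) / α) / ((2 * Real.pi) ^ d * α)))) := by
  have : NeZero d := ⟨by omega⟩
  have hmass : Tendsto (· * m) (𝓝[>] 0) (𝓝[>] 0) :=
    tendsto_nhdsWithin_iff.mpr ⟨(continuous_mul_const m).tendsto' 0 0 (zero_mul m)
      |>.mono_left nhdsWithin_le_nhds, eventually_nhdsWithin_of_forall fun t ht => mul_pos ht hm⟩
  have hlim := ((tendsto_integral_exp_neg_relSymbol
    (volume : Measure (EuclideanSpace ℝ (Fin d))) hα₀).comp hmass).const_mul ((2 * π) ^ (-(d : ℝ)))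
  have hconst : (2 * π) ^ (-(d : ℝ)) * (2 * π ^ ((d : ℝ) / 2) / Gamma ((d : ℝ) / 2) *
      Gamma ((d : ℝ) / α) / α) = 2 * π ^ ((d : ℝ) / 2) / Gamma ((d : ℝ) / 2) *
        Gamma ((d : ℝ) / α) / ((2 * π) ^ d * α) := by
    rw [rpow_neg (by positivity), rpow_natCast]; field_simp
  rw [integral_exp_neg_norm_rpow hα₀, finrank_euclideanSpace_fin, hconst] at hlim
  have hmain : Tendsto (fun t : ℝ => t ^ ((d : ℝ) / α) * relDensity d α m t 0)
      (𝓝[>] 0) _ := hlim.congr' <| eventually_nhdsWithin_of_forall fun t (ht : 0 < t) => by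
    dsimp only [Function.comp_apply]
    rw [← rpow_mul_integral_exp_neg_mul_relSymbol volume hα₀.ne' ht hm.le,
      finrank_euclideanSpace_fin, relDensity_zero]
    ring
  refine ⟨hmain, fun D _ _ => ?_⟩
  simpa only [setIntegral_const, smul_eq_mul, measureReal_def, mul_left_comm]
    using hmain.const_mul (volume D).toReal

/-- `lim_{t→0⁺} t^{d/α} p^m(t,0) = ω_d Γ(d/α)/((2π)^d α)`, and consequently for any
measurable set `D` of finite Lebesgue measure,
`lim_{t→0⁺} t^{d/α} ∫_D p^m(t,0) dx = |D| ω_d Γ(d/α)/((2π)^d α)`. -/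
theorem relDensity_on_diagonal_limit (d : ℕ) (hd : 2 ≤ d) (α : ℝ) (hα₀ : 0 < α)
    (hα₂ : α < 2) (m : ℝ) (hm : 0 < m) :
    Tendsto (fun t : ℝ => t ^ ((d : ℝ) / α) * relDensity d α m t 0)
        (nhdsWithin 0 (Set.Ioi 0))
        (nhds ((2 * Real.pi ^ ((d : ℝ) / 2) / Real.Gamma ((d : ℝ) / 2)) *
          Real.Gamma ((d : ℝ) / α) / ((2 * Real.pi) ^ d * α)))
      ∧ ∀ D : Set (EuclideanSpace ℝ (Fin d)), MeasurableSet D → volume D < ⊤ →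
          Tendsto (fun t : ℝ => t ^ ((d : ℝ) / α) * ∫ _x in D, relDensity d α m t 0)
            (nhdsWithin 0 (Set.Ioi 0))
            (nhds ((volume D).toReal *
              ((2 * Real.pi ^ ((d : ℝ) / 2) / Real.Gamma ((d : ℝ) / 2)) *
                Real.Gamma ((d : ℝ) / α) / ((2 * Real.pi) ^ d * α)))) :=
  relDensity_on_diagonal_limit_general d hd α hα₀ m hm
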